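/- Suppose the n-agent network is (n−κ)-redundant and the global least squares solution of Ax=b is unique (equivalently ⋂_{i=1}^n ker A_i = {0}). Then for any subset S ⊆ {1,…,n} with |S| ≥ κ, ⋂_{i∈S} ker A_i = {0}. -/

import Mathlib

open Matrix Finset

/-- The set of least squares solutions over the subset `S` of agents:
minimizers of `x ↦ ∑ i ∈ S, ‖A_i x − b_i‖²`. -/
def lsSet {n d : ℕ} {r : Fin n → ℕ} (A : ∀ i, Matrix (Fin (r i)) (Fin d) ℝ)
    (b : ∀ i, Fin (r i) → ℝ) (S : Finset (Fin n)) : Set (Fin d → ℝ) :=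
  {x | ∀ y : Fin d → ℝ,
      ∑ i ∈ S, ∑ j, ((A i *ᵥ x - b i) j) ^ 2 ≤ ∑ i ∈ S, ∑ j, ((A i *ᵥ y - b i) j) ^ 2}

/-- An `n`-agent network with data `(A_i, b_i)` is `k`-redundant if for any two subsets
`S₁, S₂` of agents with `|S₁| = |S₂| = n − k`, the least squares solution sets over
`S₁` and `S₂` coincide. -/
def kRedundant {n d : ℕ} {r : Fin n → ℕ} (A : ∀ i, Matrix (Fin (r i)) (Fin d) ℝ)
    (b : ∀ i, Fin (r i) → ℝ) (k : ℕ) : Prop :=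
  ∀ S₁ S₂ : Finset (Fin n), S₁.card = n - k → S₂.card = n - k →
    lsSet A b S₁ = lsSet A b S₂

/-! A vector `v` killed by every `A_i`, `i ∈ S`, maps least squares solutions over any
`κ`-subset `S' ⊆ S` to least squares solutions. By redundancy the solution set over `S'` equals
the one over any `κ`-subset `T` containing a prescribed agent `i`. The cost over `T` is the
squared distance from the stacked right-hand side to the image of the stacked map, so by strict
convexity of the Euclidean norm two solutions `x` and `x + v` over `T` have the same image, which
gives `A_i v = 0`. Hence `v` lies in every `ker A_i`, and `v = 0`. -/

section LeastSquares

variable {E F : Type*} [AddCommGroup E] [Module ℝ E]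

theorem LinearMap.exists_forall_norm_sub_le [NormedAddCommGroup F] [InnerProductSpace ℝ F]
    [FiniteDimensional ℝ F] (L : E →ₗ[ℝ] F) (c : F) :
    ∃ x, ∀ y, ‖L x - c‖ ≤ ‖L y - c‖ := by
  set K := LinearMap.range L
  obtain ⟨x, hx⟩ := LinearMap.mem_range.1 (K.starProjection_apply_mem c)
  refine ⟨x, fun y => ?_⟩
  rw [norm_sub_rev, hx, Submodule.starProjection_minimal, norm_sub_rev]
  exact ciInf_le ⟨0, Set.forall_mem_range.2 fun _ => norm_nonneg _⟩
    (⟨L y, LinearMap.mem_range_self L y⟩ : K)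

theorem LinearMap.eq_of_forall_norm_sub_le [NormedAddCommGroup F] [NormedSpace ℝ F]
    [StrictConvexSpace ℝ F] (L : E →ₗ[ℝ] F) (c : F) {x y : E}
    (hx : ∀ z, ‖L x - c‖ ≤ ‖L z - c‖) (hy : ∀ z, ‖L y - c‖ ≤ ‖L z - c‖) : L x = L y := by
  have hxy : ‖L x - c‖ = ‖L y - c‖ := le_antisymm (hx y) (hy x)
  have hmid : L ((1 / 2 : ℝ) • (x + y)) - c = (1 / 2 : ℝ) • ((L x - c) + (L y - c)) := by
    rw [map_smul, map_add]
    module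
  by_contra hne
  have hlt := (norm_midpoint_lt_iff hxy).2 (sub_left_injective.ne hne)
  exact (hx _).not_gt (hmid ▸ hlt)

end LeastSquares

section Network

variable {n d : ℕ} {r : Fin n → ℕ} (A : ∀ i, Matrix (Fin (r i)) (Fin d) ℝ)
    (b : ∀ i, Fin (r i) → ℝ) (T : Finset (Fin n))

def lsCost (x : Fin d → ℝ) : ℝ :=
  ∑ i ∈ T, ∑ j, ((A i *ᵥ x - b i) j) ^ 2

theorem lsSet_eq_setOf_lsCost_le : lsSet A b T = {x | ∀ y, lsCost A b T x ≤ lsCost A b T y} :=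
  rfl

noncomputable def stackMap : (Fin d → ℝ) →ₗ[ℝ] EuclideanSpace ℝ ((i : T) × Fin (r i)) where
  toFun x := WithLp.toLp 2 fun p => (A p.1 *ᵥ x) p.2
  map_add' x y := by ext p; simp [Matrix.mulVec_add]
  map_smul' c x := by ext p; simp [Matrix.mulVec_smul]

noncomputable def stackVec : EuclideanSpace ℝ ((i : T) × Fin (r i)) :=
  WithLp.toLp 2 fun p => b p.1 p.2

theorem lsCost_eq_norm_sq (x : Fin d → ℝ) :
    lsCost A b T x = ‖stackMap A T x - stackVec b T‖ ^ 2 := by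
  rw [EuclideanSpace.norm_eq, Real.sq_sqrt (by positivity), lsCost,
    ← Finset.sum_coe_sort T, ← Finset.univ_sigma_univ, Finset.sum_sigma]
  simp [stackMap, stackVec, sq_abs]

theorem mem_lsSet_iff_norm_sub_le {x : Fin d → ℝ} :
    x ∈ lsSet A b T ↔ ∀ y, ‖stackMap A T x - stackVec b T‖ ≤ ‖stackMap A T y - stackVec b T‖ := by
  simp only [lsSet_eq_setOf_lsCost_le, Set.mem_ofPred_eq, lsCost_eq_norm_sq,
    sq_le_sq₀ (norm_nonneg _) (norm_nonneg _)]

theorem stackMap_eq_stackMap_iff {x y : Fin d → ℝ} :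
    stackMap A T x = stackMap A T y ↔ ∀ i ∈ T, A i *ᵥ x = A i *ᵥ y := by
  simp [stackMap, funext_iff, Sigma.forall, Subtype.forall]

theorem lsSet_nonempty : (lsSet A b T).Nonempty := by
  obtain ⟨x, hx⟩ := (stackMap A T).exists_forall_norm_sub_le (stackVec b T)
  exact ⟨x, (mem_lsSet_iff_norm_sub_le A b T).2 hx⟩

variable {A b T}

theorem mulVec_eq_of_mem_lsSet {x y : Fin d → ℝ} (hx : x ∈ lsSet A b T) (hy : y ∈ lsSet A b T) :
    ∀ i ∈ T, A i *ᵥ x = A i *ᵥ y :=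
  (stackMap_eq_stackMap_iff A T).1 <| (stackMap A T).eq_of_forall_norm_sub_le (stackVec b T)
    ((mem_lsSet_iff_norm_sub_le A b T).1 hx) ((mem_lsSet_iff_norm_sub_le A b T).1 hy)

theorem add_mem_lsSet {x v : Fin d → ℝ} (hv : ∀ i ∈ T, A i *ᵥ v = 0) (hx : x ∈ lsSet A b T) :
    x + v ∈ lsSet A b T := by
  have : lsCost A b T (x + v) = lsCost A b T x :=
    Finset.sum_congr rfl fun i hi => by rw [Matrix.mulVec_add, hv i hi, add_zero]
  rw [lsSet_eq_setOf_lsCost_le] at hx ⊢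
  exact fun y => this.trans_le (hx y)

theorem kRedundant.lsSet_eq {κ : ℕ} (hred : kRedundant A b (n - κ)) (hκn : κ ≤ n)
    {S₁ S₂ : Finset (Fin n)} (h₁ : S₁.card = κ) (h₂ : S₂.card = κ) :
    lsSet A b S₁ = lsSet A b S₂ :=
  hred S₁ S₂ (by omega) (by omega)

end Network

theorem inter_ker_eq_zero_of_redundant_general {n d : ℕ} {rdim : Fin n → ℕ}
    (A : ∀ i, Matrix (Fin (rdim i)) (Fin d) ℝ) (b : ∀ i, Fin (rdim i) → ℝ)
    (κ : ℕ) (hκ1 : 1 ≤ κ)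
    (hred : kRedundant A b (n - κ))
    (huniq : (⋂ i : Fin n, {x : Fin d → ℝ | A i *ᵥ x = 0}) = {0})
    (S : Finset (Fin n)) (hS : κ ≤ S.card) :
    (⋂ i ∈ S, {x : Fin d → ℝ | A i *ᵥ x = 0}) = {0} := by
  refine Set.eq_singleton_iff_unique_mem.2 ⟨by simp, fun v hv => ?_⟩
  simp only [Set.mem_iInter, Set.mem_ofPred_eq] at hv
  suffices v ∈ ⋂ i, {x : Fin d → ℝ | A i *ᵥ x = 0} by simpa [huniq] using this
  refine Set.mem_iInter.2 fun i => ?_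
  have hκn : κ ≤ n := hS.trans ((card_le_univ S).trans_eq (Fintype.card_fin n))
  obtain ⟨S', hS'S, hS'⟩ := exists_subset_card_eq hS
  obtain ⟨T, hiT, -, hT⟩ := exists_subsuperset_card_eq (subset_univ {i})
    (by simpa using hκ1) (by simpa using hκn)
  have hST : lsSet A b S' = lsSet A b T := hred.lsSet_eq hκn hS' hT
  obtain ⟨x, hx⟩ := lsSet_nonempty A b T
  have hxv : x + v ∈ lsSet A b T :=
    hST ▸ add_mem_lsSet (fun j hj => hv j (hS'S hj)) (hST ▸ hx)
  simpa [Matrix.mulVec_add] using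
    (mulVec_eq_of_mem_lsSet hx hxv i (hiT (mem_singleton_self i))).symm

/-- Suppose the `n`-agent network is `(n − κ)`-redundant and the
global least squares solution of `Ax = b` is unique, equivalently
`⋂_{i=1}^n ker A_i = {0}`. Then for any subset `S` with `|S| ≥ κ`,
`⋂_{i ∈ S} ker A_i = {0}`. -/
theorem inter_ker_eq_zero_of_redundant {n d : ℕ} {rdim : Fin n → ℕ}
    (A : ∀ i, Matrix (Fin (rdim i)) (Fin d) ℝ) (b : ∀ i, Fin (rdim i) → ℝ)
    (κ : ℕ) (hκ1 : 1 ≤ κ) (hκn : κ ≤ n)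
    (hred : kRedundant A b (n - κ))
    (huniq : (⋂ i : Fin n, {x : Fin d → ℝ | A i *ᵥ x = 0}) = {0})
    (S : Finset (Fin n)) (hS : κ ≤ S.card) :
    (⋂ i ∈ S, {x : Fin d → ℝ | A i *ᵥ x = 0}) = {0} :=
  inter_ker_eq_zero_of_redundant_general A b κ hκ1 hred huniq S hS
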